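/- Let I be a set of nonnegative real numbers satisfying the descending chain condition, let (d_j) be a strictly increasing sequence of elements of I, and fix a positive integer N, a positive integer m, and a real number d'. Then there is no sequence (f_j) of elements of I^+ such that d' = (N − 1 + m·d_j + f_j)/N for all j. -/

import Mathlib

/-- A set of reals satisfies the descending chain condition if it contains
no infinite strictly decreasing sequence. -/
def DCC (S : Set ℝ) : Prop := ¬ ∃ f : ℕ → ℝ, (∀ n, f n ∈ S) ∧ StrictAnti f

/-- A set of reals satisfies the ascending chain condition if it contains
no infinite strictly increasing sequence. -/
def ACC (S : Set ℝ) : Prop := ¬ ∃ f : ℕ → ℝ, (∀ n, f n ∈ S) ∧ StrictMono f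

/-- `I⁺ = {0} ∪ {x ∈ [0,1] | x is a finite (nonempty) sum of elements of I}`. -/
def plusSet (I : Set ℝ) : Set ℝ :=
  {0} ∪ {x | 0 ≤ x ∧ x ≤ 1 ∧ ∃ l : List ℝ, l ≠ [] ∧ (∀ j ∈ l, j ∈ I) ∧ l.sum = x}

/-- `D(I) = {a ≤ 1 | a = (m - 1 + f)/m, m ∈ ℤ_{>0}, f ∈ I⁺}`. -/
def DSet (I : Set ℝ) : Set ℝ :=
  {a | a ≤ 1 ∧ ∃ m : ℕ, 0 < m ∧ ∃ f ∈ plusSet I, a = ((m : ℝ) - 1 + f) / m}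

/-- `D_d(I) = {a ≤ 1 | a = (m - 1 + f + k·d)/m, k, m ∈ ℤ_{>0}, f ∈ I⁺}`. -/
def DdSet (d : ℝ) (I : Set ℝ) : Set ℝ :=
  {a | a ≤ 1 ∧ ∃ k m : ℕ, 0 < k ∧ 0 < m ∧ ∃ f ∈ plusSet I,
    a = ((m : ℝ) - 1 + f + (k : ℝ) * d) / m}

/-!
By Higman's lemma, the additive monoid generated by a well-founded set of nonnegative
reals is again well-founded; `I⁺` lies in it, so `I⁺` satisfies DCC. But solving the
equation for `f j` gives `f j = N d' - (N - 1) - m d j`, which is strictly decreasing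
because `m > 0` and `d` is strictly increasing.
-/

theorem dcc_iff_isWF (S : Set ℝ) : DCC S ↔ S.IsWF := by
  rw [Set.isWF_iff_no_descending_seq, DCC]
  exact ⟨fun h f hf hS => h ⟨f, hS, hf⟩, fun h ⟨f, hS, hf⟩ => h f hf hS⟩

theorem plusSet_subset_addSubmonoidClosure (I : Set ℝ) :
    plusSet I ⊆ (AddSubmonoid.closure I : Set ℝ) := by
  rintro x (hx | ⟨-, -, l, -, hl, rfl⟩)
  · rw [Set.mem_singleton_iff.mp hx]
    exact (AddSubmonoid.closure I).zero_mem
  · exact AddSubmonoid.list_sum_mem _ fun y hy => AddSubmonoid.subset_closure (hl y hy)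

theorem DCC.plusSet {I : Set ℝ} (hI : ∀ x ∈ I, 0 ≤ x) (hDCC : DCC I) : DCC (plusSet I) := by
  rw [dcc_iff_isWF] at hDCC ⊢
  exact ((hDCC.isPWO.addSubmonoid_closure hI).mono
    (plusSet_subset_addSubmonoidClosure I)).isWF

theorem no_constant_value_general (I : Set ℝ) (hI : ∀ x ∈ I, 0 ≤ x) (hDCC : DCC I)
    (d : ℕ → ℝ) (hmono : StrictMono d)
    (N m : ℕ) (hN : 0 < N) (hm : 0 < m) (d' : ℝ) :
    ¬ ∃ f : ℕ → ℝ, (∀ j, f j ∈ plusSet I) ∧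
      ∀ j, d' = ((N : ℝ) - 1 + (m : ℝ) * d j + f j) / N := by
  rintro ⟨f, hf, hd'⟩
  have hf_eq : ∀ j, f j = N * d' - (N - 1) - m * d j := fun j => by
    rw [hd' j, mul_div_cancel₀ _ (Nat.cast_ne_zero.mpr hN.ne')]
    ring
  have hanti : StrictAnti f := fun j k hjk => by
    rw [hf_eq j, hf_eq k]
    have : (m : ℝ) * d j < m * d k := mul_lt_mul_of_pos_left (hmono hjk) (Nat.cast_pos.mpr hm)
    linarith
  exact hDCC.plusSet hI ⟨f, hf, hanti⟩

theorem no_constant_value (I : Set ℝ) (hI : ∀ x ∈ I, 0 ≤ x) (hDCC : DCC I)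
    (d : ℕ → ℝ) (hd : ∀ j, d j ∈ I) (hmono : StrictMono d)
    (N m : ℕ) (hN : 0 < N) (hm : 0 < m) (d' : ℝ) :
    ¬ ∃ f : ℕ → ℝ, (∀ j, f j ∈ plusSet I) ∧
      ∀ j, d' = ((N : ℝ) - 1 + (m : ℝ) * d j + f j) / N :=
  no_constant_value_general I hI hDCC d hmono N m hN hm d'
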